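/- The model {P_θ : θ ∈ Θ} is differentiable in quadratic mean: for every θ₀ in the interior of Θ, with score function ℓ_{θ₀}(y,g) = φ·g₁(g)·φ(y|θ₀)·(y−θ₀)/p_{θ₀}(y,g), one has ∫_{[0,1]} ∫_ℝ ( √(p_{θ₀+t}(y,g)) − √(p_{θ₀}(y,g)) − (1/2)·t·ℓ_{θ₀}(y,g)·√(p_{θ₀}(y,g)) )² dy dg = o(t²) as t → 0. -/

import Mathlib

/-!
For fixed `(y, g)` the density is `θ ↦ a + c·φ(y|θ)` with `a ≥ 0` and `c = φ·g₁(g) ≥ 0`, and the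
term `½·t·ℓ_{θ₀}·√p_{θ₀}` is exactly `t` times the `θ`-derivative of `√p_θ` at `θ₀`. So the integrand
is the square of a first-order Taylor remainder of `θ ↦ √(a + c·φ(y|θ))`, which is at most
`sup |∂²_θ √p_θ| · t²`. That second derivative is bounded by `√(c·φ(y|θ))·((y−θ)² + 1)`, and for
`|θ − θ₀| ≤ 1` by `√c` times a Gaussian envelope in `y − θ₀`. Integrating the square against `dy dg`
gives `O(t⁴)`, since `g₁` is integrable.
-/

open MeasureTheory Filter Asymptotics

/-- The `N(θ,1)` density `φ(y|θ)`. -/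
noncomputable def npdf (y θ : ℝ) : ℝ :=
  Real.exp (-(y - θ) ^ 2 / 2) / Real.sqrt (2 * Real.pi)

theorem abs_sub_sub_mul_le_of_abs_deriv2_le {f f' f'' : ℝ → ℝ} {x t M : ℝ}
    (hf : ∀ y, HasDerivAt f (f' y) y) (hf' : ∀ y, HasDerivAt f' (f'' y) y)
    (hM : ∀ y ∈ Set.uIcc x (x + t), |f'' y| ≤ M) :
    |f (x + t) - f x - t * f' x| ≤ M * t ^ 2 := by
  have hx : x ∈ Set.uIcc x (x + t) := Set.left_mem_uIcc
  have hxt : x + t ∈ Set.uIcc x (x + t) := Set.right_mem_uIcc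
  have hM0 : 0 ≤ M := (abs_nonneg _).trans (hM x hx)
  have hf'_sub : ∀ y ∈ Set.uIcc x (x + t), ‖f' y - f' x‖ ≤ M * |t| := fun y hy => by
    have hdist : |y - x| ≤ |t| := by simpa using Set.abs_sub_left_of_mem_uIcc hy
    exact (Convex.norm_image_sub_le_of_norm_hasDerivWithin_le
      (fun z _ => (hf' z).hasDerivWithinAt) hM (convex_uIcc _ _) hx hy).trans
      (mul_le_mul_of_nonneg_left hdist hM0)
  have hlin := Convex.norm_image_sub_le_of_norm_hasDerivWithin_le
    (f := fun y => f y - y * f' x)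
    (fun z _ => ((hf z).sub (hasDerivAt_mul_const (f' x))).hasDerivWithinAt)
    hf'_sub (convex_uIcc _ _) hx hxt
  calc |f (x + t) - f x - t * f' x|
      = ‖(f (x + t) - (x + t) * f' x) - (f x - x * f' x)‖ := by
        rw [Real.norm_eq_abs]; ring_nf
    _ ≤ M * |t| * ‖x + t - x‖ := hlin
    _ = M * t ^ 2 := by
        rw [add_sub_cancel_left, Real.norm_eq_abs, mul_assoc, abs_mul_abs_self, sq]

theorem HasDerivAt.deriv_div_two_sqrt {q q' q'' : ℝ → ℝ} {θ : ℝ} (hq : 0 < q θ)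
    (hq' : HasDerivAt q (q' θ) θ) (hq'' : HasDerivAt q' (q'' θ) θ) :
    HasDerivAt (fun θ => q' θ / (2 * Real.sqrt (q θ)))
      (q'' θ / (2 * Real.sqrt (q θ)) - q' θ ^ 2 / (4 * q θ * Real.sqrt (q θ))) θ := by
  have hs : 0 < Real.sqrt (q θ) := Real.sqrt_pos.mpr hq
  refine (hq''.div ((hq'.sqrt hq.ne').const_mul 2) (by positivity)).congr_deriv ?_
  field_simp
  rw [Real.sq_sqrt hq.le]
  ring

theorem abs_sqrt_deriv2_le {a u w : ℝ} (ha : 0 ≤ a) (hu : 0 < u) :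
    |u * (w ^ 2 - 1) / (2 * Real.sqrt (a + u)) - (u * w) ^ 2 / (4 * (a + u) * Real.sqrt (a + u))|
      ≤ Real.sqrt u * (w ^ 2 + 1) := by
  set s := Real.sqrt u
  set r := Real.sqrt (a + u)
  have hs : 0 < s := Real.sqrt_pos.mpr hu
  have hsr : s ≤ r := Real.sqrt_le_sqrt (by linarith)
  have hr : 0 < r := hs.trans_le hsr
  have hu_eq : u = s ^ 2 := (Real.sq_sqrt hu.le).symm
  have hau_eq : a + u = r ^ 2 := (Real.sq_sqrt (by linarith)).symm
  have hfirst : |u * (w ^ 2 - 1) / (2 * r)| ≤ s * (w ^ 2 + 1) / 2 := by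
    rw [abs_div, abs_mul, abs_of_pos hu, abs_of_pos (by positivity : (0 : ℝ) < 2 * r),
      div_le_div_iff₀ (by positivity) (by norm_num), hu_eq]
    have hw : |w ^ 2 - 1| ≤ w ^ 2 + 1 := abs_le.mpr ⟨by nlinarith, by linarith⟩
    calc s ^ 2 * |w ^ 2 - 1| * 2 = 2 * s * (s * |w ^ 2 - 1|) := by ring
      _ ≤ 2 * s * (r * (w ^ 2 + 1)) := by gcongr
      _ = s * (w ^ 2 + 1) * (2 * r) := by ring
  have hsecond : (u * w) ^ 2 / (4 * (a + u) * r) ≤ s * w ^ 2 / 4 := by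
    rw [div_le_div_iff₀ (by positivity) (by norm_num), hau_eq, hu_eq]
    calc (s ^ 2 * w) ^ 2 * 4 = 4 * w ^ 2 * s * s ^ 3 := by ring
      _ ≤ 4 * w ^ 2 * s * r ^ 3 := by gcongr
      _ = s * w ^ 2 * (4 * r ^ 2 * r) := by ring
  calc _ ≤ |u * (w ^ 2 - 1) / (2 * r)| + |(u * w) ^ 2 / (4 * (a + u) * r)| := abs_sub _ _
    _ ≤ s * (w ^ 2 + 1) / 2 + s * w ^ 2 / 4 := by
        rw [abs_of_nonneg (by positivity : (0 : ℝ) ≤ (u * w) ^ 2 / (4 * (a + u) * r))]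
        exact add_le_add hfirst hsecond
    _ ≤ s * (w ^ 2 + 1) := by nlinarith [sq_nonneg w]

theorem npdf_pos (y θ : ℝ) : 0 < npdf y θ :=
  div_pos (Real.exp_pos _) (Real.sqrt_pos.mpr (by positivity))

theorem hasDerivAt_npdf (y θ : ℝ) : HasDerivAt (npdf y) (npdf y θ * (y - θ)) θ := by
  have hsq : HasDerivAt (fun θ : ℝ => -(y - θ) ^ 2 / 2) (y - θ) θ :=
    ((((hasDerivAt_id θ).const_sub y).pow 2).neg.div_const 2).congr_deriv (by simp)
  exact (hsq.exp.div_const _).congr_deriv (by rw [npdf]; ring)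

theorem sqrt_npdf_le (y θ : ℝ) : Real.sqrt (npdf y θ) ≤ Real.exp (-(y - θ) ^ 2 / 4) := by
  have hnpdf : npdf y θ ≤ Real.exp (-(y - θ) ^ 2 / 2) := by
    refine div_le_self (Real.exp_pos _).le ?_
    rw [Real.one_le_sqrt]
    nlinarith [Real.pi_gt_three]
  calc Real.sqrt (npdf y θ) ≤ Real.sqrt (Real.exp (-(y - θ) ^ 2 / 2)) := Real.sqrt_le_sqrt hnpdf
    _ = Real.exp (-(y - θ) ^ 2 / 4) := by rw [← Real.exp_half]; ring_nf

-- From `x² + 1 ≤ 8·exp (x²/8)` and `(s - d)² ≥ s²/2 - 1` for `|d| ≤ 1`.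
noncomputable def gaussEnvelope (s : ℝ) : ℝ :=
  8 * Real.exp (1 / 8) * Real.exp (-s ^ 2 / 16)

theorem exp_neg_sq_div_four_mul_le_gaussEnvelope (s : ℝ) {d : ℝ} (hd : |d| ≤ 1) :
    Real.exp (-(s - d) ^ 2 / 4) * ((s - d) ^ 2 + 1) ≤ gaussEnvelope s := by
  set x := s - d
  have hpoly : x ^ 2 + 1 ≤ 8 * Real.exp (x ^ 2 / 8) := by
    linarith [Real.add_one_le_exp (x ^ 2 / 8)]
  have hshift : -x ^ 2 / 8 ≤ 1 / 8 + -s ^ 2 / 16 := by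
    have : d ^ 2 ≤ 1 := by nlinarith [sq_abs d, abs_nonneg d]
    nlinarith [sq_nonneg (s - 2 * d)]
  calc Real.exp (-x ^ 2 / 4) * (x ^ 2 + 1)
      ≤ Real.exp (-x ^ 2 / 4) * (8 * Real.exp (x ^ 2 / 8)) := by gcongr
    _ = 8 * Real.exp (-x ^ 2 / 8) := by rw [mul_left_comm, ← Real.exp_add]; ring_nf
    _ ≤ 8 * Real.exp (1 / 8 + -s ^ 2 / 16) := by gcongr
    _ = gaussEnvelope s := by rw [gaussEnvelope, Real.exp_add, mul_assoc]

theorem integrable_gaussEnvelope_sq (θ₀ : ℝ) :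
    Integrable fun y => gaussEnvelope (y - θ₀) ^ 2 := by
  have h := ((integrable_exp_neg_mul_sq (by norm_num : (0 : ℝ) < 1 / 8)).const_mul
    ((8 * Real.exp (1 / 8)) ^ 2)).comp_sub_right θ₀
  refine h.congr (ae_of_all _ fun y => ?_)
  simp only [gaussEnvelope, mul_pow, ← Real.exp_nat_mul]
  ring_nf

theorem half_mul_div_mul_sqrt (t X : ℝ) {Q : ℝ} (hQ : 0 < Q) :
    1 / 2 * t * (X / Q) * Real.sqrt Q = t * (X / (2 * Real.sqrt Q)) := by
  have hs : 0 < Real.sqrt Q := Real.sqrt_pos.mpr hQ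
  field_simp
  rw [Real.sq_sqrt hQ.le]

theorem abs_deriv2_sqrt_mix_le {a c y θ θ₀ : ℝ} (ha : 0 ≤ a) (hc : 0 < c) (hθ : |θ - θ₀| ≤ 1) :
    |c * npdf y θ * ((y - θ) ^ 2 - 1) / (2 * Real.sqrt (a + c * npdf y θ)) -
        (c * npdf y θ * (y - θ)) ^ 2 /
          (4 * (a + c * npdf y θ) * Real.sqrt (a + c * npdf y θ))|
      ≤ Real.sqrt c * gaussEnvelope (y - θ₀) :=
  calc _ ≤ Real.sqrt (c * npdf y θ) * ((y - θ) ^ 2 + 1) :=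
        abs_sqrt_deriv2_le ha (mul_pos hc (npdf_pos y θ))
    _ ≤ Real.sqrt c * (Real.exp (-(y - θ) ^ 2 / 4) * ((y - θ) ^ 2 + 1)) := by
        rw [Real.sqrt_mul hc.le, mul_assoc]
        gcongr
        exact sqrt_npdf_le y θ
    _ ≤ Real.sqrt c * gaussEnvelope (y - θ₀) := by
        gcongr
        simpa only [sub_sub_sub_cancel_right] using
          exp_neg_sq_div_four_mul_le_gaussEnvelope (y - θ₀) hθ

theorem sqrt_mix_remainder_sq_le {a c y θ₀ t : ℝ} (ha : 0 ≤ a) (hc : 0 ≤ c) (ht : |t| ≤ 1) :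
    (Real.sqrt (a + c * npdf y (θ₀ + t)) - Real.sqrt (a + c * npdf y θ₀) -
        1 / 2 * t * (c * npdf y θ₀ * (y - θ₀) / (a + c * npdf y θ₀)) *
          Real.sqrt (a + c * npdf y θ₀)) ^ 2
      ≤ t ^ 4 * c * gaussEnvelope (y - θ₀) ^ 2 := by
  rcases hc.eq_or_lt with rfl | hc
  · simp
  set q : ℝ → ℝ := fun θ => a + c * npdf y θ
  have hq : ∀ θ, 0 < q θ := fun θ => by have := npdf_pos y θ; positivity
  have hq' : ∀ θ, HasDerivAt q (c * npdf y θ * (y - θ)) θ := fun θ =>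
    (((hasDerivAt_npdf y θ).const_mul c).const_add a).congr_deriv (by ring)
  have hq'' : ∀ θ, HasDerivAt (fun θ => c * npdf y θ * (y - θ))
      (c * npdf y θ * ((y - θ) ^ 2 - 1)) θ := fun θ =>
    (((hasDerivAt_npdf y θ).const_mul c).mul ((hasDerivAt_id' θ).const_sub y)).congr_deriv
      (by ring)
  have hremainder := abs_sub_sub_mul_le_of_abs_deriv2_le (x := θ₀) (t := t)
    (fun θ => (hq' θ).sqrt (hq θ).ne') (fun θ => HasDerivAt.deriv_div_two_sqrt
      (q'' := fun θ => c * npdf y θ * ((y - θ) ^ 2 - 1)) (hq θ) (hq' θ) (hq'' θ))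
    (fun θ hθ => abs_deriv2_sqrt_mix_le ha hc
      ((by simpa using Set.abs_sub_left_of_mem_uIcc hθ : |θ - θ₀| ≤ |t|).trans ht))
  calc _ = |Real.sqrt (q (θ₀ + t)) - Real.sqrt (q θ₀) -
        t * (c * npdf y θ₀ * (y - θ₀) / (2 * Real.sqrt (q θ₀)))| ^ 2 := by
        rw [sq_abs, ← half_mul_div_mul_sqrt _ _ (hq θ₀)]
    _ ≤ (Real.sqrt c * gaussEnvelope (y - θ₀) * t ^ 2) ^ 2 := by gcongr
    _ = t ^ 4 * c * gaussEnvelope (y - θ₀) ^ 2 := by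
        rw [mul_pow, mul_pow, Real.sq_sqrt hc.le]; ring

theorem integral_integral_le_of_le_mul {α β : Type*} [MeasurableSpace α] [MeasurableSpace β]
    {μ : Measure α} {ν : Measure β} {F : α → β → ℝ} {G : α → ℝ} {H : β → ℝ}
    (hF : ∀ x y, 0 ≤ F x y) (hFGH : ∀ x y, F x y ≤ G x * H y)
    (hG : Integrable G μ) (hH : Integrable H ν) :
    ∫ x, ∫ y, F x y ∂ν ∂μ ≤ (∫ x, G x ∂μ) * ∫ y, H y ∂ν := by
  have hinner : ∀ x, ∫ y, F x y ∂ν ≤ G x * ∫ y, H y ∂ν := fun x =>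
    (integral_mono_of_nonneg (ae_of_all _ (hF x)) (hH.const_mul _)
      (ae_of_all _ (hFGH x))).trans_eq (integral_const_mul _ _)
  calc ∫ x, ∫ y, F x y ∂ν ∂μ ≤ ∫ x, G x * ∫ y, H y ∂ν ∂μ :=
        integral_mono_of_nonneg (ae_of_all _ fun x => integral_nonneg (hF x))
          (hG.mul_const _) (ae_of_all _ hinner)
    _ = (∫ x, G x ∂μ) * ∫ y, H y ∂ν := integral_mul_const _ _

theorem stmt18_general (φ : ℝ) (hφ : φ ∈ Set.Ioo (0 : ℝ) 1) (K : ℝ)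
    (g₀ g₁ : ℝ → ℝ)
    (hg₀nn : ∀ x, 0 ≤ g₀ x) (hg₁nn : ∀ x, 0 ≤ g₁ x)
    (hg₁int : ∫ x in Set.Icc (0 : ℝ) 1, g₁ x = 1)
    (p : ℝ → ℝ × ℝ → ℝ)
    (hp : ∀ θ y g, p θ (y, g) = (1 - φ) * g₀ g * npdf y 0 + φ * g₁ g * npdf y θ)
    (score : ℝ → ℝ × ℝ → ℝ)
    (hscore : ∀ θ₀ y g, score θ₀ (y, g) = φ * g₁ g * npdf y θ₀ * (y - θ₀) / p θ₀ (y, g)) :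
    ∀ θ₀ ∈ Set.Ioo (-K) K,
      (fun t : ℝ =>
          ∫ g in Set.Icc (0 : ℝ) 1, ∫ y : ℝ,
            (Real.sqrt (p (θ₀ + t) (y, g)) - Real.sqrt (p θ₀ (y, g)) -
              (1 / 2) * t * score θ₀ (y, g) * Real.sqrt (p θ₀ (y, g))) ^ 2)
        =o[nhds 0] fun t : ℝ => t ^ 2 := by
  intro θ₀ _
  have hg₁ : IntegrableOn g₁ (Set.Icc 0 1) := Integrable.of_integral_ne_zero (by simp [hg₁int])
  set C := ∫ y, gaussEnvelope (y - θ₀) ^ 2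
  refine (IsBigO.of_bound (φ * C) ?_).trans_isLittleO (isLittleO_pow_pow (by norm_num : 2 < 4))
  filter_upwards [Icc_mem_nhds (by norm_num : (-1 : ℝ) < 0) one_pos] with t ht
  rw [Real.norm_of_nonneg (integral_nonneg fun g => integral_nonneg fun y => sq_nonneg _),
    Real.norm_of_nonneg (by positivity)]
  simp only [hp, hscore]
  calc _ ≤ (∫ g in Set.Icc 0 1, t ^ 4 * (φ * g₁ g)) * C :=
        integral_integral_le_of_le_mul (fun _ _ => sq_nonneg _)
          (fun g y => sqrt_mix_remainder_sq_le
            (mul_nonneg (mul_nonneg (by linarith [hφ.2]) (hg₀nn g)) (npdf_pos y 0).le)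
            (mul_nonneg hφ.1.le (hg₁nn g)) (abs_le.mpr ht))
          ((hg₁.const_mul φ).const_mul _) (integrable_gaussEnvelope_sq θ₀)
    _ = φ * C * t ^ 4 := by rw [integral_const_mul, integral_const_mul, hg₁int]; ring

/-- The model `{P_θ}` given by `p_θ(y,g) = (1−φ)·g₀(g)·φ(y|0) + φ·g₁(g)·φ(y|θ)` is
differentiable in quadratic mean at every `θ₀` in the interior of `Θ = [−K,K]`, with score
`ℓ_{θ₀}(y,g) = φ·g₁(g)·φ(y|θ₀)·(y−θ₀)/p_{θ₀}(y,g)`: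
`∫∫ (√p_{θ₀+t} − √p_{θ₀} − ½ t ℓ_{θ₀} √p_{θ₀})² dy dg = o(t²)` as `t → 0`. -/
theorem stmt18 (φ : ℝ) (hφ : φ ∈ Set.Ioo (0 : ℝ) 1) (K : ℝ) (hK : 0 < K)
    (g₀ g₁ : ℝ → ℝ) (hg₀m : Measurable g₀) (hg₁m : Measurable g₁)
    (hg₀nn : ∀ x, 0 ≤ g₀ x) (hg₁nn : ∀ x, 0 ≤ g₁ x)
    (hg₀int : ∫ x in Set.Icc (0 : ℝ) 1, g₀ x = 1)
    (hg₁int : ∫ x in Set.Icc (0 : ℝ) 1, g₁ x = 1)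
    (p : ℝ → ℝ × ℝ → ℝ)
    (hp : ∀ θ y g, p θ (y, g) = (1 - φ) * g₀ g * npdf y 0 + φ * g₁ g * npdf y θ)
    (score : ℝ → ℝ × ℝ → ℝ)
    (hscore : ∀ θ₀ y g, score θ₀ (y, g) = φ * g₁ g * npdf y θ₀ * (y - θ₀) / p θ₀ (y, g)) :
    ∀ θ₀ ∈ Set.Ioo (-K) K,
      (fun t : ℝ =>
          ∫ g in Set.Icc (0 : ℝ) 1, ∫ y : ℝ,
            (Real.sqrt (p (θ₀ + t) (y, g)) - Real.sqrt (p θ₀ (y, g)) -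
              (1 / 2) * t * score θ₀ (y, g) * Real.sqrt (p θ₀ (y, g))) ^ 2)
        =o[nhds 0] fun t : ℝ => t ^ 2 :=
  stmt18_general φ hφ K g₀ g₁ hg₀nn hg₁nn hg₁int p hp score hscore
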